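/- Let f : ℝ^d → ℝ be convex and differentiable with L-Lipschitz gradient, where L > 0. Then the map w ↦ w − ∇f(w) is Lipschitz continuous with constant max{L − 1, 1}: for all w, w' ∈ ℝ^d, ‖(w − ∇f(w)) − (w' − ∇f(w'))‖₂ ≤ max{L − 1, 1}·‖w − w'‖₂. -/

import Mathlib

/-!
Convexity gives `f x + ⟪∇f x, y - x⟫ ≤ f y` and the Lipschitz gradient gives the descent lemma
`f y ≤ f x + ⟪∇f x, y - x⟫ + L/2 ‖y - x‖²`. Comparing the two at the point `y - (∇f y - ∇f x)/L`
yields co-coercivity `‖u‖² ≤ L ⟪u, x⟫` for `u = ∇f w - ∇f w'`, `x = w - w'`. Then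
`‖x - u‖² ≤ ‖x‖² + (1 - 2/L) ‖u‖²`, and since also `‖u‖ ≤ L ‖x‖`, the right-hand side is at most
`‖x‖²` when `L ≤ 2` and at most `(L - 1)² ‖x‖²` when `L ≥ 2`.
-/

open Set AffineMap
open scoped InnerProductSpace

variable {E : Type*} [NormedAddCommGroup E] [InnerProductSpace ℝ E] [CompleteSpace E]
  {f : E → ℝ} {L : ℝ}

theorem DifferentiableAt.hasDerivAt_comp_lineMap {x y : E} {t : ℝ}
    (hf : DifferentiableAt ℝ f (lineMap x y t)) :
    HasDerivAt (fun s ↦ f (lineMap x y s)) ⟪gradient f (lineMap x y t), y - x⟫_ℝ t := by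
  rw [inner_gradient_left]
  exact hf.hasFDerivAt.comp_hasDerivAt t hasDerivAt_lineMap

theorem ConvexOn.add_inner_gradient_le (hf : ConvexOn ℝ univ f) {x : E}
    (hx : DifferentiableAt ℝ f x) (y : E) :
    f x + ⟪gradient f x, y - x⟫_ℝ ≤ f y := by
  have hline : ConvexOn ℝ univ (fun t : ℝ ↦ f (lineMap x y t)) := by
    have := hf.comp_affineMap (lineMap x y)
    rwa [preimage_univ] at this
  have hderiv : HasDerivAt (fun t : ℝ ↦ f (lineMap x y t)) ⟪gradient f x, y - x⟫_ℝ 0 := by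
    have := DifferentiableAt.hasDerivAt_comp_lineMap (x := x) (y := y) (t := 0)
      (by rwa [lineMap_apply_zero])
    rwa [lineMap_apply_zero] at this
  have := hline.le_slope_of_hasDerivAt (mem_univ 0) (mem_univ 1) zero_lt_one hderiv
  simp only [slope_def_field, lineMap_apply_zero, lineMap_apply_one, sub_zero, div_one] at this
  linarith

theorem le_add_inner_gradient_add_sq_norm (hdiff : ∀ w, DifferentiableAt ℝ f w)
    (hlip : ∀ w v, ‖gradient f w - gradient f v‖ ≤ L * ‖w - v‖) (x y : E) :
    f y ≤ f x + ⟪gradient f x, y - x⟫_ℝ + L / 2 * ‖y - x‖ ^ 2 := by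
  set v := y - x
  have hline (t : ℝ) : HasDerivAt (fun s : ℝ ↦ f (lineMap x y s))
      ⟪gradient f (lineMap x y t), v⟫_ℝ t :=
    (hdiff _).hasDerivAt_comp_lineMap
  have hbound (t : ℝ) :
      HasDerivAt (fun s ↦ f x + s * ⟪gradient f x, v⟫_ℝ + L / 2 * s ^ 2 * ‖v‖ ^ 2)
        (⟪gradient f x, v⟫_ℝ + L * t * ‖v‖ ^ 2) t := by
    refine ((((hasDerivAt_id' t).mul_const _).const_add _).add
      (((hasDerivAt_pow 2 t).const_mul (L / 2)).mul_const (‖v‖ ^ 2))).congr_deriv ?_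
    push_cast; ring
  have key := image_le_of_deriv_right_le_deriv_boundary (a := 0) (b := 1)
    (fun t _ ↦ (hline t).continuousAt.continuousWithinAt)
    (fun t _ ↦ (hline t).hasDerivWithinAt) (by simp)
    (fun t _ ↦ (hbound t).continuousAt.continuousWithinAt)
    (fun t _ ↦ (hbound t).hasDerivWithinAt) ?_ (right_mem_Icc.2 zero_le_one)
  · simpa using key
  rintro t ⟨ht, -⟩
  have hdist : ‖lineMap x y t - x‖ = t * ‖v‖ := by
    rw [lineMap_apply_module', add_sub_cancel_right, norm_smul, Real.norm_of_nonneg ht]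
  have := calc ⟪gradient f (lineMap x y t) - gradient f x, v⟫_ℝ
      _ ≤ ‖gradient f (lineMap x y t) - gradient f x‖ * ‖v‖ := real_inner_le_norm _ _
      _ ≤ L * ‖lineMap x y t - x‖ * ‖v‖ := by grw [hlip]
      _ = L * t * ‖v‖ ^ 2 := by rw [hdist]; ring
  rw [inner_sub_left] at this
  linarith

theorem ConvexOn.add_inner_gradient_add_sq_norm_div_le (hf : ConvexOn ℝ univ f) (hL : 0 < L)
    (hdiff : ∀ w, DifferentiableAt ℝ f w)
    (hlip : ∀ w v, ‖gradient f w - gradient f v‖ ≤ L * ‖w - v‖) (x y : E) :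
    f x + ⟪gradient f x, y - x⟫_ℝ + ‖gradient f y - gradient f x‖ ^ 2 / (2 * L) ≤ f y := by
  set u := gradient f y - gradient f x
  have hlower := hf.add_inner_gradient_le (hdiff x) (y - L⁻¹ • u)
  have hupper := le_add_inner_gradient_add_sq_norm hdiff hlip y (y - L⁻¹ • u)
  rw [show y - L⁻¹ • u - x = (y - x) - L⁻¹ • u by abel, inner_sub_right,
    real_inner_smul_right] at hlower
  rw [show y - L⁻¹ • u - y = -(L⁻¹ • u) by abel, inner_neg_right, real_inner_smul_right, norm_neg,
    norm_smul, Real.norm_of_nonneg (inv_nonneg.2 hL.le)] at hupper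
  have hu : ⟪gradient f y, u⟫_ℝ - ⟪gradient f x, u⟫_ℝ = ‖u‖ ^ 2 := by
    rw [← inner_sub_left, real_inner_self_eq_norm_sq]
  have hcoef : L / 2 * (L⁻¹ * ‖u‖) ^ 2 = L⁻¹ * ‖u‖ ^ 2 - ‖u‖ ^ 2 / (2 * L) := by
    field_simp; ring
  linear_combination hlower + hupper - L⁻¹ * hu + hcoef

theorem ConvexOn.sq_norm_gradient_sub_le_mul_inner (hf : ConvexOn ℝ univ f) (hL : 0 < L)
    (hdiff : ∀ w, DifferentiableAt ℝ f w)
    (hlip : ∀ w v, ‖gradient f w - gradient f v‖ ≤ L * ‖w - v‖) (x y : E) :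
    ‖gradient f y - gradient f x‖ ^ 2 ≤ L * ⟪gradient f y - gradient f x, y - x⟫_ℝ := by
  have hxy := hf.add_inner_gradient_add_sq_norm_div_le hL hdiff hlip x y
  have hyx := hf.add_inner_gradient_add_sq_norm_div_le hL hdiff hlip y x
  rw [norm_sub_rev, ← neg_sub y x, inner_neg_right] at hyx
  have hhalves : ‖gradient f y - gradient f x‖ ^ 2 / L =
      2 * (‖gradient f y - gradient f x‖ ^ 2 / (2 * L)) := by
    field_simp
  rw [← div_le_iff₀' hL, inner_sub_left]
  linarith

theorem norm_sub_le_max_mul_norm_of_sq_norm_le_mul_inner {F : Type*} [NormedAddCommGroup F]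
    [InnerProductSpace ℝ F] {x u : F} (hL : 0 < L) (h : ‖u‖ ^ 2 ≤ L * ⟪u, x⟫_ℝ) :
    ‖x - u‖ ≤ max (L - 1) 1 * ‖x‖ := by
  have hux : ‖u‖ ≤ L * ‖x‖ := by
    have : ‖u‖ ^ 2 ≤ L * (‖u‖ * ‖x‖) := h.trans (by gcongr; exact real_inner_le_norm u x)
    nlinarith [mul_nonneg hL.le (norm_nonneg x)]
  have hsq : ‖x - u‖ ^ 2 ≤ ‖x‖ ^ 2 + (1 - 2 / L) * ‖u‖ ^ 2 := by
    have : 2 / L * ‖u‖ ^ 2 ≤ 2 * ⟪x, u⟫_ℝ := by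
      rw [real_inner_comm, div_mul_eq_mul_div, div_le_iff₀ hL]; linarith
    rw [norm_sub_sq_real]; linarith
  rw [← pow_le_pow_iff_left₀ (norm_nonneg _) (by positivity) two_ne_zero]
  refine hsq.trans ?_
  rcases le_total L 2 with hL2 | hL2
  · have : 1 - 2 / L ≤ 0 := by rw [sub_nonpos, le_div_iff₀ hL]; linarith
    rw [max_eq_right (by linarith)]
    nlinarith [sq_nonneg ‖u‖]
  · have : 0 ≤ 1 - 2 / L := by rw [sub_nonneg, div_le_iff₀ hL]; linarith
    rw [max_eq_left (by linarith)]
    calc ‖x‖ ^ 2 + (1 - 2 / L) * ‖u‖ ^ 2 ≤ ‖x‖ ^ 2 + (1 - 2 / L) * (L * ‖x‖) ^ 2 := by gcongr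
      _ = ((L - 1) * ‖x‖) ^ 2 := by field_simp; ring

/-- If `f : ℝ^d → ℝ` is convex and differentiable with `L`-Lipschitz gradient (`L > 0`),
then `w ↦ w − ∇f(w)` is Lipschitz with constant `max (L − 1) 1`. -/
theorem id_sub_gradient_lipschitz (d : ℕ) (f : EuclideanSpace ℝ (Fin d) → ℝ) (L : ℝ)
    (hL : 0 < L) (hconv : ConvexOn ℝ Set.univ f)
    (hdiff : ∀ w, DifferentiableAt ℝ f w)
    (hlip : ∀ w v : EuclideanSpace ℝ (Fin d),
      ‖gradient f w - gradient f v‖ ≤ L * ‖w - v‖) :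
    ∀ w w' : EuclideanSpace ℝ (Fin d),
      ‖(w - gradient f w) - (w' - gradient f w')‖ ≤ max (L - 1) 1 * ‖w - w'‖ := by
  intro w w'
  rw [sub_sub_sub_comm]
  exact norm_sub_le_max_mul_norm_of_sq_norm_le_mul_inner hL
    (hconv.sq_norm_gradient_sub_le_mul_inner hL hdiff hlip w' w)
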